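/- arXiv:1903.10192 — 4 statements merged into one kernel-verified Lean document; each statement's English description precedes it below -/
import Mathlib

section
/- Let X and Y be complex vector spaces and let P : X → Y be an m-homogeneous polynomial (i.e., P(x) = φ(x,...,x) for some m-linear map φ : X^m → Y). If P vanishes on a convex subset C of X, then P vanishes on the linear span of C. -/
open Finset

/-- A multilinear map vanishing whenever all arguments lie in `s` vanishes whenever all
arguments lie in the span of `s`. -/
lemma multilinear_vanish_span {X Y : Type*} [AddCommGroup X] [Module ℂ X]
    [AddCommGroup Y] [Module ℂ Y] {m : ℕ}
    (f : MultilinearMap ℂ (fun _ : Fin m => X) Y) (s : Set X)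
    (h : ∀ v : Fin m → X, (∀ i, v i ∈ s) → f v = 0) :
    ∀ v : Fin m → X, (∀ i, v i ∈ Submodule.span ℂ s) → f v = 0 := by
  suffices H : ∀ k : ℕ, ∀ v : Fin m → X,
      (∀ i : Fin m, (i : ℕ) < k → v i ∈ Submodule.span ℂ s) →
      (∀ i : Fin m, ¬ (i : ℕ) < k → v i ∈ s) → f v = 0 by
    intro v hv
    exact H m v (fun i _ => hv i) (fun i hi => absurd i.isLt hi)
  intro k
  induction k with
  | zero => exact fun v _ hv => h v fun i => hv i (by omega)
  | succ k ih =>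
    intro v hv1 hv2
    by_cases hk : k < m
    · set i : Fin m := ⟨k, hk⟩ with hi
      have hx : v i ∈ Submodule.span ℂ s := hv1 i (by simp [hi])
      have key : ∀ x ∈ Submodule.span ℂ s, f (Function.update v i x) = 0 := by
        intro x hxmem
        induction hxmem using Submodule.span_induction with
        | mem x hxs =>
          apply ih
          · intro j hj
            rw [Function.update_of_ne (by simp [hi, Fin.ext_iff]; omega)]
            exact hv1 j (by omega)
          · intro j hj
            rcases eq_or_ne j i with rfl | hne
            · simpa using hxs
            · rw [Function.update_of_ne hne]
              apply hv2 j
              have : (j : ℕ) ≠ k := fun hjk => hne (by simp [hi, Fin.ext_iff, hjk])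
              omega
        | zero => exact f.map_update_zero v i
        | add x y hx' hy' ihx ihy => rw [f.map_update_add, ihx, ihy, add_zero]
        | smul a x hx' ihx => rw [f.map_update_smul, ihx, smul_zero]
      have := key (v i) hx
      rwa [Function.update_eq_self] at this
    · refine ih v (fun j hj => hv1 j (by omega)) (fun j hj => absurd (by omega : (j : ℕ) < k) hj)

/-- Polarization: the symmetrization of a multilinear map vanishes on tuples from a convex set
on whose diagonal the map vanishes. -/
lemma polar_vanish {X Y : Type*} [AddCommGroup X] [Module ℂ X]
    [AddCommGroup Y] [Module ℂ Y] [Module ℝ X] [IsScalarTower ℝ ℂ X]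
    {m : ℕ} (hm : 1 ≤ m)
    (φ : MultilinearMap ℂ (fun _ : Fin m => X) Y)
    (C : Set X) (hC : Convex ℝ C)
    (hvanish : ∀ c ∈ C, φ (fun _ => c) = 0)
    (c : Fin m → X) (hc : ∀ i, c i ∈ C) :
    ∑ σ : Equiv.Perm (Fin m), φ (fun i => c (σ i)) = 0 := by
  haveI : Nonempty (Fin m) := ⟨⟨0, hm⟩⟩
  classical
  -- each polarization term vanishes
  have hterm : ∀ S : Finset (Fin m), φ (fun _ => ∑ j ∈ S, c j) = 0 := by
    intro S
    rcases S.eq_empty_or_nonempty with rfl | hS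
    · simp only [Finset.sum_empty]
      exact φ.map_zero
    · have hcard0 : (S.card : ℝ) ≠ 0 := Nat.cast_ne_zero.2 hS.card_pos.ne'
      set b : X := (S.card : ℝ)⁻¹ • ∑ j ∈ S, c j with hb_def
      have hb : b ∈ C := by
        have := hC.sum_mem (t := S) (w := fun _ => (S.card : ℝ)⁻¹) (z := c)
          (fun i _ => by positivity) (by simp [Finset.sum_const, mul_comm, hcard0]) 
          (fun i hi => hc i)
        simpa [hb_def, Finset.smul_sum] using this
      have hsum : (fun _ : Fin m => ∑ j ∈ S, c j) = fun _ : Fin m => (S.card : ℂ) • b := by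
        funext _
        have h1 : (S.card : ℝ) • b = ∑ j ∈ S, c j := by
          rw [hb_def, smul_inv_smul₀ hcard0]
        have h2 : (S.card : ℂ) • b = (S.card : ℝ) • b := by
          rw [Nat.cast_smul_eq_nsmul, Nat.cast_smul_eq_nsmul]
        rw [h2, h1]
      rw [hsum]
      have := φ.map_smul_univ (fun _ => (S.card : ℂ)) (fun _ => b)
      rw [this, hvanish b hb, smul_zero]
  -- the polarization sum is zero
  have hT : ∑ S : Finset (Fin m),
      ((-1 : ℤ) ^ (Sᶜ.card)) • φ (fun _ => ∑ j ∈ S, c j) = 0 := by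
    simp only [hterm, smul_zero, Finset.sum_const_zero]
  -- expand each term by multilinearity
  have hexp : ∀ S : Finset (Fin m),
      φ (fun _ => ∑ j ∈ S, c j)
        = ∑ r : Fin m → Fin m, if (∀ i, r i ∈ S) then φ (fun i => c (r i)) else 0 := by
    intro S
    have hset : Fintype.piFinset (fun _ : Fin m => S)
        = Finset.univ.filter (fun r : Fin m → Fin m => ∀ i, r i ∈ S) := by
      ext r
      simp [Fintype.mem_piFinset]
    rw [φ.map_sum_finset (A := fun _ => S) (g := fun _ j => c j), hset, Finset.sum_filter]
  rw [Finset.sum_congr rfl (fun S _ => by rw [hexp S])] at hT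
  simp only [Finset.smul_sum] at hT
  rw [Finset.sum_comm] at hT
  -- compute the coefficient of each `r`
  have hcoef : ∀ r : Fin m → Fin m,
      ∑ S : Finset (Fin m),
        ((-1 : ℤ) ^ (Sᶜ.card)) • (if (∀ i, r i ∈ S) then φ (fun i => c (r i)) else 0)
      = (if Function.Surjective r then (1 : ℤ) else 0) • φ (fun i => c (r i)) := by
    intro r
    have key : ∑ S : Finset (Fin m), (if (∀ i, r i ∈ S) then ((-1 : ℤ) ^ (Sᶜ.card)) else 0)
        = if Function.Surjective r then 1 else 0 := by
      set R : Finset (Fin m) := Finset.image r Finset.univ with hR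
      have hcond : ∀ S : Finset (Fin m), (∀ i, r i ∈ S) ↔ R ⊆ S := by
        intro S
        rw [hR, Finset.image_subset_iff]
        simp
      calc ∑ S : Finset (Fin m), (if (∀ i, r i ∈ S) then ((-1 : ℤ) ^ (Sᶜ.card)) else 0)
          = ∑ S : Finset (Fin m), (if S ⊆ Rᶜ then ((-1 : ℤ) ^ (S.card)) else 0) := by
            apply Fintype.sum_equiv ⟨compl, compl, compl_compl, compl_compl⟩
            intro S
            simp only [Equiv.coe_fn_mk, hcond, compl_compl]
            congr 1
            · simp [Finset.subset_compl_comm]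
        _ = ∑ S ∈ (Rᶜ).powerset, ((-1 : ℤ) ^ (S.card)) := by
            rw [← Finset.sum_filter]
            congr 1
            ext S
            simp [Finset.mem_powerset]
        _ = if Rᶜ = ∅ then 1 else 0 := Finset.sum_powerset_neg_one_pow_card
        _ = if Function.Surjective r then 1 else 0 := by
            congr 1
            rw [Finset.compl_eq_empty_iff, eq_iff_iff, hR]
            constructor
            · intro h y
              have : y ∈ Finset.image r Finset.univ := by rw [h]; exact Finset.mem_univ y
              simpa using this
            · intro h
              ext y
              simpa using h y
    calc ∑ S : Finset (Fin m),
          ((-1 : ℤ) ^ (Sᶜ.card)) • (if (∀ i, r i ∈ S) then φ (fun i => c (r i)) else 0)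
        = ∑ S : Finset (Fin m),
          (if (∀ i, r i ∈ S) then ((-1 : ℤ) ^ (Sᶜ.card)) else 0) • φ (fun i => c (r i)) := by
          apply Finset.sum_congr rfl
          intro S _
          by_cases hS : ∀ i, r i ∈ S <;> simp [hS]
      _ = (if Function.Surjective r then (1 : ℤ) else 0) • φ (fun i => c (r i)) := by
          rw [← Finset.sum_smul, key]
  rw [Finset.sum_congr rfl (fun r _ => hcoef r)] at hT
  -- restrict to surjective maps, which are exactly the permutations
  have hT2 : ∑ r ∈ Finset.univ.filter (fun r : Fin m → Fin m => Function.Surjective r),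
      φ (fun i => c (r i)) = 0 := by
    rw [Finset.sum_filter]
    rw [show (∑ r : Fin m → Fin m, if Function.Surjective r then φ (fun i => c (r i)) else 0)
        = ∑ r : Fin m → Fin m,
            (if Function.Surjective r then (1 : ℤ) else 0) • φ (fun i => c (r i)) from
      Finset.sum_congr rfl (fun r _ => by by_cases hr : Function.Surjective r <;> simp [hr])]
    exact hT
  rw [← hT2]
  apply Finset.sum_bij (fun (σ : Equiv.Perm (Fin m)) _ => (σ : Fin m → Fin m))
  · intro σ _
    simp [σ.surjective]
  · intro σ₁ _ σ₂ _ h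
    exact Equiv.coe_fn_injective h
  · intro r hr
    rw [Finset.mem_filter] at hr
    have hbij : Function.Bijective r := Finite.surjective_iff_bijective.1 hr.2
    exact ⟨Equiv.ofBijective r hbij, Finset.mem_univ _, rfl⟩
  · intro σ _
    rfl

/-- If an `m`-homogeneous polynomial `P x = φ (x, ..., x)` between complex vector spaces
vanishes on a convex set `C`, then it vanishes on the linear span of `C`. -/
theorem stmt_0 {X Y : Type*} [AddCommGroup X] [Module ℂ X]
    [AddCommGroup Y] [Module ℂ Y] [Module ℝ X] [IsScalarTower ℝ ℂ X]
    (m : ℕ) (hm : 1 ≤ m)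
    (φ : MultilinearMap ℂ (fun _ : Fin m => X) Y)
    (C : Set X) (hC : Convex ℝ C)
    (hvanish : ∀ c ∈ C, φ (fun _ => c) = 0) :
    ∀ x ∈ Submodule.span ℂ C, φ (fun _ => x) = 0 := by
  intro x hx
  haveI : Nonempty (Fin m) := ⟨⟨0, hm⟩⟩
  set ψ : MultilinearMap ℂ (fun _ : Fin m => X) Y :=
    ∑ σ : Equiv.Perm (Fin m), φ.domDomCongr σ with hψ
  have hψapp : ∀ v : Fin m → X, ψ v = ∑ σ : Equiv.Perm (Fin m), φ (fun i => v (σ i)) := by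
    intro v
    rw [hψ, MultilinearMap.sum_apply]
    rfl
  have hψC : ∀ v : Fin m → X, (∀ i, v i ∈ C) → ψ v = 0 := by
    intro v hv
    rw [hψapp]
    exact polar_vanish hm φ C hC hvanish v hv
  have hspan := multilinear_vanish_span ψ C hψC (fun _ => x) (fun _ => hx)
  rw [hψapp] at hspan
  have hconst : ∑ σ : Equiv.Perm (Fin m), φ (fun _ : Fin m => x)
      = (m.factorial : ℂ) • φ (fun _ => x) := by
    rw [Finset.sum_const, Finset.card_univ, Fintype.card_perm, Fintype.card_fin,
      Nat.cast_smul_eq_nsmul]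
  rw [hconst] at hspan
  have hne : (m.factorial : ℂ) ≠ 0 := Nat.cast_ne_zero.2 m.factorial_ne_zero
  exact (smul_eq_zero.1 hspan).resolve_left hne
end

section
/- Let A be a C*-algebra, let x₁, x₂ be positive mutually orthogonal elements of A, let m ≥ 2, and let ω ∈ ℂ with |ω| = 1. Then ‖x₁^{1/m} + ω x₂^{1/m}‖^m = max(‖x₁‖, ‖x₂‖). -/
/-!
Functional calculus preserves annihilation: if `a * b = 0` then `f(a) * b = 0`, because this holds
for `f = id` and is stable under the operations generating `C(σₙ a, ℝ)₀` as a closed algebra.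
Hence the `m`-th roots `y₁`, `y₂` of `x₁`, `x₂` are again orthogonal, so `y₁` and `ω • y₂` are
commuting normal elements with zero product. They generate a commutative C⋆-algebra, in which
`‖y₁ + ω • y₂‖ = max ‖y₁‖ ‖y₂‖`, and `‖yᵢ‖ ^ m = ‖xᵢ‖`.
-/

open scoped NNReal

section Orthogonal

variable {A : Type*} [TopologicalSpace A] [NonUnitalRing A] [StarRing A] [Module ℝ A]
  [IsSemitopologicalRing A] [IsScalarTower ℝ A A] [SMulCommClass ℝ A A] [T2Space A]
  [NonUnitalContinuousFunctionalCalculus ℝ A IsSelfAdjoint]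

lemma cfcₙ_mul_eq_zero_of_mul_eq_zero (f : ℝ → ℝ) {a b : A} (hab : a * b = 0) :
    cfcₙ f a * b = 0 := by
  refine cfcₙ_cases (· * b = 0) a f (zero_mul b) fun _ _ ha ↦ ?_
  have := NonUnitalContinuousFunctionalCalculus.compactSpace_quasispectrum
    (R := ℝ) (p := IsSelfAdjoint) a
  have hid : cfcₙHom ha (.id (quasispectrum ℝ a)) * b = 0 := by rwa [cfcₙHom_id]
  exact ContinuousMapZero.nonUnitalStarAlgHom_apply_mul_eq_zero _ b hid
    (by rwa [star_trivial]) (cfcₙHom_continuous ha) _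

variable [PartialOrder A] [StarOrderedRing A] [NonnegSpectrumClass ℝ A]

lemma cfcₙ_nnreal_mul_eq_zero_of_mul_eq_zero (f : ℝ≥0 → ℝ≥0) {a b : A} (hab : a * b = 0) :
    cfcₙ f a * b = 0 := by
  by_cases ha : 0 ≤ a
  · rw [cfcₙ_nnreal_eq_real f a]
    exact cfcₙ_mul_eq_zero_of_mul_eq_zero _ hab
  · rw [cfcₙ_apply_of_not_predicate a ha, zero_mul]

lemma CFC.nnrpow_mul_eq_zero_of_mul_eq_zero (r : ℝ≥0) {a b : A} (hab : a * b = 0) :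
    CFC.nnrpow a r * b = 0 :=
  cfcₙ_nnreal_mul_eq_zero_of_mul_eq_zero _ hab

lemma CFC.nnrpow_mul_nnrpow_eq_zero {a b : A} (hb : IsSelfAdjoint b) (hab : a * b = 0)
    (r s : ℝ≥0) : CFC.nnrpow a r * CFC.nnrpow b s = 0 := by
  have hrb : CFC.nnrpow a r * b = 0 := nnrpow_mul_eq_zero_of_mul_eq_zero r hab
  have hbr : b * CFC.nnrpow a r = 0 :=
    ((IsSelfAdjoint.of_nonneg nnrpow_nonneg).commute_of_mul_eq_zero hb hrb).eq ▸ hrb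
  have hsr : CFC.nnrpow b s * CFC.nnrpow a r = 0 := nnrpow_mul_eq_zero_of_mul_eq_zero s hbr
  exact ((IsSelfAdjoint.of_nonneg nnrpow_nonneg).commute_of_mul_eq_zero
    (.of_nonneg nnrpow_nonneg) hsr).eq ▸ hsr

end Orthogonal

section Norm

variable {A : Type*} [NonUnitalCStarAlgebra A]

lemma IsSelfAdjoint.norm_add_smul_eq_max {a b : A} (ha : IsSelfAdjoint a) (hb : IsSelfAdjoint b)
    (hab : a * b = 0) (ω : ℂ) : ‖a + ω • b‖ = max ‖a‖ (‖ω‖ * ‖b‖) := by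
  have hcomm : Commute a (ω • b) := (ha.commute_of_mul_eq_zero hb hab).smul_right ω
  have := hb.isStarNormal
  rw [ha.isStarNormal.norm_add_eq_max inferInstance hcomm (by rw [mul_smul_comm, hab, smul_zero]),
    norm_smul]

variable [PartialOrder A] [StarOrderedRing A]

lemma CFC.norm_nnrpow_one_div_pow {a : A} (ha : 0 ≤ a) {n : ℕ} (hn : n ≠ 0) :
    ‖CFC.nnrpow a (1 / n : ℝ≥0)‖ ^ n = ‖a‖ := by
  rw [show CFC.nnrpow a (1 / n : ℝ≥0) = a ^ (1 / n : ℝ≥0) from rfl,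
    norm_nnrpow a (by positivity) ha]
  simpa using Real.rpow_inv_natCast_pow (norm_nonneg a) hn

end Norm

theorem stmt_8_general {A : Type*} [CStarAlgebra A] [PartialOrder A] [StarOrderedRing A]
    (x₁ x₂ : A) (hx₁ : 0 ≤ x₁) (hx₂ : 0 ≤ x₂)
    (h₁₂ : x₁ * x₂ = 0)
    (m : ℕ) (hm : 2 ≤ m) (ω : ℂ) (hω : ‖ω‖ = 1) :
    ‖CFC.nnrpow x₁ (1 / m : ℝ≥0) + ω • CFC.nnrpow x₂ (1 / m : ℝ≥0)‖ ^ m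
      = max ‖x₁‖ ‖x₂‖ := by
  have hm₀ : m ≠ 0 := by omega
  rw [IsSelfAdjoint.norm_add_smul_eq_max (.of_nonneg CFC.nnrpow_nonneg)
    (.of_nonneg CFC.nnrpow_nonneg) (CFC.nnrpow_mul_nnrpow_eq_zero (.of_nonneg hx₂) h₁₂ _ _),
    hω, one_mul, pow_left_monotoneOn.map_max (norm_nonneg _) (norm_nonneg _),
    CFC.norm_nnrpow_one_div_pow hx₁ hm₀, CFC.norm_nnrpow_one_div_pow hx₂ hm₀]

/-- In a C*-algebra, if `x₁, x₂` are positive and mutually orthogonal, `m ≥ 2`, and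
`|ω| = 1`, then `‖x₁^{1/m} + ω • x₂^{1/m}‖^m = max ‖x₁‖ ‖x₂‖`. -/
theorem stmt_8 {A : Type*} [CStarAlgebra A] [PartialOrder A] [StarOrderedRing A]
    (x₁ x₂ : A) (hx₁ : 0 ≤ x₁) (hx₂ : 0 ≤ x₂)
    (h₁₂ : x₁ * x₂ = 0) (h₂₁ : x₂ * x₁ = 0)
    (m : ℕ) (hm : 2 ≤ m) (ω : ℂ) (hω : ‖ω‖ = 1) :
    ‖CFC.nnrpow x₁ (1 / m : ℝ≥0) + ω • CFC.nnrpow x₂ (1 / m : ℝ≥0)‖ ^ m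
      = max ‖x₁‖ ‖x₂‖ :=
  stmt_8_general x₁ x₂ hx₁ hx₂ h₁₂ m hm ω hω
end

section
/- Let A be a C*-algebra, X a q-normed space with 0 < q ≤ 1, Φ : A → X a continuous linear map, and m ≥ 2. Let P(x) = Φ(x^m). Then 2^{-1/q} ‖Φ‖ ≤ ‖P‖ ≤ ‖Φ‖, where ‖P‖ = sup{‖P(x)‖ : ‖x‖ ≤ 1}. -/
/-!
Splitting `x = ℜ x + i ℑ x` and taking `m`-th roots of the two self-adjoint parts by continuous
functional calculus writes every `x` in the unit ball as `y₁ ^ m + y₂ ^ m` with `y₁, y₂` in the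
unit ball. The `q`-triangle inequality then gives `‖Φ x‖ ^ q ≤ 2 ‖P‖ ^ q`. The upper bound holds
because `x ↦ x ^ m` maps the unit ball into itself.
-/

open Complex ComplexStarModule

lemma Complex.exists_pow_eq_and_norm_eq_one {n : ℕ} (hn : n ≠ 0) {w : ℂ} (hw : ‖w‖ = 1) :
    ∃ ζ : ℂ, ζ ^ n = w ∧ ‖ζ‖ = 1 := by
  obtain ⟨ζ, hζ⟩ := IsAlgClosed.exists_pow_nat_eq w (Nat.pos_of_ne_zero hn)
  refine ⟨ζ, hζ, (pow_eq_one_iff_of_nonneg (norm_nonneg ζ) hn).mp ?_⟩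
  rw [← norm_pow, hζ, hw]

/-- For `ζ ^ m = -1`, an `m`-th root of `t` depending continuously on `t`: only one of the two
summands is nonzero. -/
noncomputable def realNthRoot (m : ℕ) (ζ : ℂ) (t : ℝ) : ℂ :=
  ((max t 0 ^ (m : ℝ)⁻¹ : ℝ) : ℂ) + ζ * ((max (-t) 0 ^ (m : ℝ)⁻¹ : ℝ) : ℂ)

section realNthRoot

variable {m : ℕ} {ζ : ℂ}

lemma continuous_realNthRoot : Continuous (realNthRoot m ζ) := by
  have hroot := Real.continuous_rpow_const (q := (m : ℝ)⁻¹) (by positivity)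
  unfold realNthRoot
  fun_prop

lemma realNthRoot_of_nonneg (hm : m ≠ 0) {t : ℝ} (ht : 0 ≤ t) :
    realNthRoot m ζ t = ((t ^ (m : ℝ)⁻¹ : ℝ) : ℂ) := by
  simp [realNthRoot, ht, Real.zero_rpow (inv_ne_zero (Nat.cast_ne_zero.mpr hm))]

lemma realNthRoot_of_nonpos (hm : m ≠ 0) {t : ℝ} (ht : t ≤ 0) :
    realNthRoot m ζ t = ζ * (((-t) ^ (m : ℝ)⁻¹ : ℝ) : ℂ) := by
  simp [realNthRoot, ht, Real.zero_rpow (inv_ne_zero (Nat.cast_ne_zero.mpr hm))]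

lemma realNthRoot_pow (hm : m ≠ 0) (hζ : ζ ^ m = -1) (t : ℝ) : realNthRoot m ζ t ^ m = t := by
  rcases le_total 0 t with ht | ht
  · rw [realNthRoot_of_nonneg hm ht, ← ofReal_pow, Real.rpow_inv_natCast_pow ht hm]
  · rw [realNthRoot_of_nonpos hm ht, mul_pow, hζ, ← ofReal_pow,
      Real.rpow_inv_natCast_pow (neg_nonneg.mpr ht) hm]
    push_cast
    ring

lemma norm_realNthRoot (hm : m ≠ 0) (hζ : ‖ζ‖ = 1) (t : ℝ) :
    ‖realNthRoot m ζ t‖ = |t| ^ (m : ℝ)⁻¹ := by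
  rcases le_total 0 t with ht | ht
  · rw [realNthRoot_of_nonneg hm ht, norm_real, Real.norm_of_nonneg (by positivity),
      abs_of_nonneg ht]
  · rw [realNthRoot_of_nonpos hm ht, norm_mul, hζ, one_mul, norm_real,
      Real.norm_of_nonneg (Real.rpow_nonneg (neg_nonneg.mpr ht) _), abs_of_nonpos ht]

end realNthRoot

section CStarAlgebra

variable {A : Type*} [CStarAlgebra A] {m : ℕ}

lemma IsSelfAdjoint.exists_pow_eq_and_norm_le {a : A} (ha : IsSelfAdjoint a) (hm : m ≠ 0) :
    ∃ y : A, y ^ m = a ∧ ‖y‖ ≤ ‖a‖ ^ (m : ℝ)⁻¹ := by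
  obtain ⟨ζ, hζm, hζ⟩ := Complex.exists_pow_eq_and_norm_eq_one hm (w := -1) (by simp)
  have hcont : Continuous fun z : ℂ ↦ realNthRoot m ζ z.re :=
    continuous_realNthRoot.comp continuous_re
  refine ⟨cfc (fun z ↦ realNthRoot m ζ z.re) a, ?_, ?_⟩
  · rw [← cfc_pow _ m a hcont.continuousOn]
    conv_rhs => rw [← cfc_id' ℂ a]
    refine cfc_congr fun z hz ↦ ?_
    rw [realNthRoot_pow hm hζm, ← ha.mem_spectrum_eq_re hz]
  · obtain _ | _ := subsingleton_or_nontrivial A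
    · rw [Subsingleton.elim (cfc _ a) 0, norm_zero]
      positivity
    refine norm_cfc_le (by positivity) fun z hz ↦ ?_
    rw [norm_realNthRoot hm hζ]
    gcongr
    exact (abs_re_le_norm z).trans (spectrum.norm_le_norm_of_mem hz)

lemma CStarAlgebra.exists_pow_add_pow_eq (x : A) (hm : m ≠ 0) :
    ∃ y₁ y₂ : A, ‖y₁‖ ≤ ‖x‖ ^ (m : ℝ)⁻¹ ∧ ‖y₂‖ ≤ ‖x‖ ^ (m : ℝ)⁻¹ ∧ y₁ ^ m + y₂ ^ m = x := by
  obtain ⟨y₁, hy₁m, hy₁⟩ := (ℜ x).prop.exists_pow_eq_and_norm_le hm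
  obtain ⟨y₂, hy₂m, hy₂⟩ := (ℑ x).prop.exists_pow_eq_and_norm_le hm
  obtain ⟨ζ, hζm, hζ⟩ := Complex.exists_pow_eq_and_norm_eq_one hm (w := I) (by simp)
  refine ⟨y₁, ζ • y₂, ?_, ?_, ?_⟩
  · exact hy₁.trans (by gcongr; exact realPart.norm_le x)
  · rw [norm_smul, hζ, one_mul]
    exact hy₂.trans (by gcongr; exact imaginaryPart.norm_le x)
  · rw [smul_pow, hy₁m, hy₂m, hζm, realPart_add_I_smul_imaginaryPart]

end CStarAlgebra

lemma Real.le_two_rpow_inv_mul_of_rpow_le_add {q s a b c : ℝ} (hq : 0 < q) (hs : 0 ≤ s)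
    (ha : 0 ≤ a) (hb : 0 ≤ b) (hsab : s ^ q ≤ a ^ q + b ^ q) (hac : a ≤ c) (hbc : b ≤ c) :
    s ≤ 2 ^ q⁻¹ * c := by
  have hc : 0 ≤ c := ha.trans hac
  rw [← Real.rpow_le_rpow_iff hs (by positivity) hq,
    Real.mul_rpow (by positivity) hc, Real.rpow_inv_rpow zero_le_two hq.ne']
  calc s ^ q ≤ a ^ q + b ^ q := hsab
    _ ≤ c ^ q + c ^ q := by gcongr
    _ = 2 * c ^ q := by ring

theorem stmt_11_general {A X : Type*} [CStarAlgebra A] [AddCommGroup X] [Module ℂ X]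
    (q : ℝ) (hq0 : 0 < q)
    (N : X → ℝ)
    (hN0 : ∀ x, 0 ≤ N x)
    (hNadd : ∀ x y, N (x + y) ^ q ≤ N x ^ q + N y ^ q)
    (m : ℕ) (hm : 2 ≤ m)
    (Φ : A →ₗ[ℂ] X)
    (normΦ normP : ℝ)
    (hΦ : IsLUB {r : ℝ | ∃ x : A, ‖x‖ ≤ 1 ∧ r = N (Φ x)} normΦ)
    (hP : IsLUB {r : ℝ | ∃ x : A, ‖x‖ ≤ 1 ∧ r = N (Φ (x ^ m))} normP) :
    (2 : ℝ) ^ (-(1 / q)) * normΦ ≤ normP ∧ normP ≤ normΦ := by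
  have hm0 : m ≠ 0 := by omega
  refine ⟨?_, hP.2 ?_⟩
  · have hΦP : normΦ ≤ 2 ^ q⁻¹ * normP := hΦ.2 <| by
      rintro _ ⟨x, hx, rfl⟩
      have hroot : ‖x‖ ^ (m : ℝ)⁻¹ ≤ 1 := Real.rpow_le_one (norm_nonneg x) hx (by positivity)
      obtain ⟨y₁, y₂, hy₁, hy₂, rfl⟩ := CStarAlgebra.exists_pow_add_pow_eq x hm0
      rw [map_add]
      exact Real.le_two_rpow_inv_mul_of_rpow_le_add hq0 (hN0 _) (hN0 _) (hN0 _) (hNadd _ _)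
        (hP.1 ⟨y₁, hy₁.trans hroot, rfl⟩) (hP.1 ⟨y₂, hy₂.trans hroot, rfl⟩)
    rwa [Real.rpow_neg zero_le_two, inv_mul_le_iff₀ (by positivity), one_div]
  · rintro _ ⟨x, hx, rfl⟩
    exact hΦ.1 ⟨x ^ m, (norm_pow_le' x (by omega)).trans (pow_le_one₀ (norm_nonneg x) hx), rfl⟩

/-- Let `A` be a C*-algebra and `X` a `q`-normed space (`0 < q ≤ 1`) with `q`-norm `N`.
For a linear map `Φ : A → X` and `m ≥ 2`, set `P x = Φ (x^m)`.  If `normΦ` and `normP`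
are the least upper bounds of `N ∘ Φ` and `N ∘ P` on the closed unit ball of `A`
(so that `Φ` is bounded, i.e. continuous), then `2^{-1/q} * normΦ ≤ normP ≤ normΦ`. -/
theorem stmt_11 {A X : Type*} [CStarAlgebra A] [AddCommGroup X] [Module ℂ X]
    (q : ℝ) (hq0 : 0 < q) (hq1 : q ≤ 1)
    (N : X → ℝ)
    (hN0 : ∀ x, 0 ≤ N x)
    (hNzero : ∀ x, N x = 0 ↔ x = 0)
    (hNadd : ∀ x y, N (x + y) ^ q ≤ N x ^ q + N y ^ q)
    (hNsmul : ∀ (c : ℂ) (x : X), N (c • x) = ‖c‖ * N x)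
    (m : ℕ) (hm : 2 ≤ m)
    (Φ : A →ₗ[ℂ] X)
    (normΦ normP : ℝ)
    (hΦ : IsLUB {r : ℝ | ∃ x : A, ‖x‖ ≤ 1 ∧ r = N (Φ x)} normΦ)
    (hP : IsLUB {r : ℝ | ∃ x : A, ‖x‖ ≤ 1 ∧ r = N (Φ (x ^ m))} normP) :
    (2 : ℝ) ^ (-(1 / q)) * normΦ ≤ normP ∧ normP ≤ normΦ :=
  stmt_11_general q hq0 N hN0 hNadd m hm Φ normΦ normP hΦ hP
end

section
/- Let A be a C*-algebra and Φ : A → ℂ a continuous hermitian linear functional (Φ(x*) = conj(Φ(x)) for all x). Let m ≥ 2 and P(x) = Φ(x^m). Then ‖P‖ = ‖Φ‖, where ‖P‖ = sup{|P(x)| : ‖x‖ ≤ 1}. -/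
/-!
Since `‖x ^ m‖ ≤ ‖x‖ ^ m`, the supremum is at most `‖Φ‖`. Conversely, for `‖y‖ ≤ 1` pick a unit
scalar `c` with `c Φ(y) = |Φ(y)|`; hermiticity gives `Φ(Re (c y)) = Re (c Φ(y)) = |Φ(y)|`, and
`Re (c y)` is self-adjoint of norm at most `1`. A self-adjoint `h` with `‖h‖ ≤ 1` is an `m`-th power
`x ^ m` with `‖x‖ ≤ 1`: apply the continuous functional calculus to a continuous `m`-th root on
`ℝ`, taking `t ↦ t ^ (1/m)` for `t ≥ 0` and `t ↦ exp (π i / m) (-t) ^ (1/m)` for `t ≤ 0`.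
-/

open Complex ComplexConjugate

noncomputable def complexRootOfReal (m : ℕ) (t : ℝ) : ℂ :=
  (t⁺ ^ (m⁻¹ : ℝ) : ℝ) + exp (Real.pi * I / m) * (t⁻ ^ (m⁻¹ : ℝ) : ℝ)

section complexRootOfReal

variable {m : ℕ} {t : ℝ}

lemma exp_pi_mul_I_div_pow (hm : m ≠ 0) : exp (Real.pi * I / m) ^ m = -1 := by
  rw [← exp_nat_mul, mul_div_cancel₀ _ (Nat.cast_ne_zero.2 hm), exp_pi_mul_I]

lemma norm_exp_pi_mul_I_div (m : ℕ) : ‖exp (Real.pi * I / m)‖ = 1 := by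
  simpa [mul_div_right_comm] using norm_exp_ofReal_mul_I (Real.pi / m)

lemma complexRootOfReal_of_nonneg (hm : m ≠ 0) (ht : 0 ≤ t) :
    complexRootOfReal m t = (t ^ (m⁻¹ : ℝ) : ℝ) := by
  simp [complexRootOfReal, posPart_of_nonneg ht, negPart_of_nonneg ht, hm]

lemma complexRootOfReal_of_nonpos (hm : m ≠ 0) (ht : t ≤ 0) :
    complexRootOfReal m t = exp (Real.pi * I / m) * ((-t) ^ (m⁻¹ : ℝ) : ℝ) := by
  simp [complexRootOfReal, posPart_of_nonpos ht, negPart_of_nonpos ht, hm]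

lemma continuous_complexRootOfReal (m : ℕ) : Continuous (complexRootOfReal m) := by
  unfold complexRootOfReal
  fun_prop (disch := positivity)

lemma complexRootOfReal_pow (hm : m ≠ 0) (t : ℝ) : complexRootOfReal m t ^ m = t := by
  rcases le_total 0 t with ht | ht
  · rw [complexRootOfReal_of_nonneg hm ht, ← ofReal_pow, Real.rpow_inv_natCast_pow ht hm]
  · rw [complexRootOfReal_of_nonpos hm ht, mul_pow, exp_pi_mul_I_div_pow hm, ← ofReal_pow,
      Real.rpow_inv_natCast_pow (neg_nonneg.2 ht) hm]
    push_cast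
    ring

lemma norm_complexRootOfReal (hm : m ≠ 0) (t : ℝ) :
    ‖complexRootOfReal m t‖ = |t| ^ (m⁻¹ : ℝ) := by
  rcases le_total 0 t with ht | ht
  · rw [complexRootOfReal_of_nonneg hm ht, norm_real, Real.norm_of_nonneg (by positivity),
      abs_of_nonneg ht]
  · rw [complexRootOfReal_of_nonpos hm ht, norm_mul, norm_exp_pi_mul_I_div, one_mul, norm_real,
      Real.norm_of_nonneg (Real.rpow_nonneg (neg_nonneg.2 ht) _), abs_of_nonpos ht]

end complexRootOfReal

theorem IsSelfAdjoint.exists_pow_eq {A : Type*} [CStarAlgebra A] {h : A} (hh : IsSelfAdjoint h)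
    {m : ℕ} (hm : m ≠ 0) : ∃ x : A, ‖x‖ ≤ ‖h‖ ^ (m⁻¹ : ℝ) ∧ x ^ m = h := by
  rcases subsingleton_or_nontrivial A with _ | _
  · exact ⟨h, by simp [Subsingleton.elim h 0]; positivity, Subsingleton.elim _ _⟩
  refine ⟨cfc (fun z ↦ complexRootOfReal m z.re) h, ?_, ?_⟩
  · refine norm_cfc_le (by positivity) fun z hz ↦ ?_
    rw [norm_complexRootOfReal hm]
    exact Real.rpow_le_rpow (abs_nonneg _)
      ((abs_re_le_norm z).trans (spectrum.norm_le_norm_of_mem hz)) (by positivity)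
  · have hcont : Continuous fun z : ℂ ↦ complexRootOfReal m z.re :=
      (continuous_complexRootOfReal m).comp continuous_re
    rw [← cfc_pow _ m h hcont.continuousOn]
    conv_rhs => rw [← cfc_id ℂ h]
    refine cfc_congr fun z hz ↦ ?_
    rw [complexRootOfReal_pow hm, id, ← hh.mem_spectrum_eq_re hz]

lemma apply_realPart_of_map_star {E F : Type*} [AddCommGroup E] [StarAddMonoid E] [Module ℂ E]
    [StarModule ℂ E] [FunLike F E ℂ] [LinearMapClass F ℂ E ℂ] (Φ : F)
    (hΦ : ∀ x, Φ (star x) = conj (Φ x)) (a : E) : Φ (realPart a) = (Φ a).re := by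
  rw [realPart_apply_coe, LinearMapClass.map_smul_of_tower, map_add, hΦ, add_conj]
  simp

lemma exists_isSelfAdjoint_norm_le_apply_eq_norm {E F : Type*} [SeminormedAddCommGroup E]
    [StarAddMonoid E] [NormedSpace ℂ E] [StarModule ℂ E] [NormedStarGroup E] [FunLike F E ℂ]
    [LinearMapClass F ℂ E ℂ] (Φ : F) (hΦ : ∀ x, Φ (star x) = conj (Φ x)) (y : E) :
    ∃ h : E, IsSelfAdjoint h ∧ ‖h‖ ≤ ‖y‖ ∧ Φ h = ‖Φ y‖ := by
  set c := exp (-(arg (Φ y) * I))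
  have hc : ‖c‖ = 1 := by simpa [c, neg_mul] using norm_exp_ofReal_mul_I (-arg (Φ y))
  have hcΦ : c * Φ y = ‖Φ y‖ := by
    conv_lhs => rw [← norm_mul_exp_arg_mul_I (Φ y)]
    rw [mul_left_comm, ← exp_add, neg_add_cancel, exp_zero, mul_one]
  refine ⟨realPart (c • y), (realPart (c • y)).prop, ?_, ?_⟩
  · simpa [norm_smul, hc] using realPart.norm_le (c • y)
  · rw [apply_realPart_of_map_star Φ hΦ, map_smul, smul_eq_mul, hcΦ, ofReal_re]

/-- For a continuous hermitian linear functional `Φ` on a C*-algebra and `m ≥ 2`,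
the norm of the polynomial `x ↦ Φ (x^m)` over the closed unit ball equals `‖Φ‖`. -/
theorem stmt_12 {A : Type*} [CStarAlgebra A]
    (Φ : A →L[ℂ] ℂ) (hherm : ∀ x : A, Φ (star x) = starRingEnd ℂ (Φ x))
    (m : ℕ) (hm : 2 ≤ m) :
    sSup {r : ℝ | ∃ x : A, ‖x‖ ≤ 1 ∧ r = ‖Φ (x ^ m)‖} = ‖Φ‖ := by
  rw [← Φ.sSup_unitClosedBall_eq_norm]
  congr 1
  ext r
  simp only [Set.mem_ofPred_eq, Set.mem_image, Metric.mem_closedBall, dist_zero_right]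
  constructor
  · rintro ⟨x, hx, rfl⟩
    exact ⟨x ^ m, (norm_pow_le' x (by omega)).trans (pow_le_one₀ (norm_nonneg x) hx), rfl⟩
  · rintro ⟨y, hy, rfl⟩
    obtain ⟨h, hsa, hhy, hΦh⟩ := exists_isSelfAdjoint_norm_le_apply_eq_norm Φ hherm y
    obtain ⟨x, hx, rfl⟩ := hsa.exists_pow_eq (m := m) (by omega)
    refine ⟨x, hx.trans (Real.rpow_le_one (norm_nonneg _) (hhy.trans hy) (by positivity)), ?_⟩
    rw [hΦh, norm_real, norm_norm]
end
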